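/- arXiv:1001.2851 — 3 statements merged into one kernel-verified Lean document; each statement's English description precedes it below -/
import Mathlib

section
/- For every g ∈ G and every σ-integrable function f on S, ∫_S f(g^{-1}(x)) dσ(x) = ∫_S f(y) · κ(g,y)^{n-1} dσ(y). -/
open MeasureTheory Matrix

noncomputable section

/-- The Lorentzian bilinear form `[x,y] = x₀y₀ − Σ_{i=1}^n x_i y_i` on `ℝ^{n+1}`. -/
def lform (n : ℕ) (x y : Fin (n+1) → ℝ) : ℝ :=
  x 0 * y 0 - ∑ i : Fin n, x i.succ * y i.succ

/-- For `x ∈ S ⊂ ℝⁿ`, `x̃ = (1, x₁, …, x_n) ∈ ℝ^{n+1}`. -/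
def tilde (n : ℕ) (x : EuclideanSpace ℝ (Fin n)) : Fin (n+1) → ℝ :=
  Fin.cons 1 (fun i => x i)

/-- Membership in `G = SO₀(1,n)`. -/
def IsLorentz (n : ℕ) (g : Matrix (Fin (n+1)) (Fin (n+1)) ℝ) : Prop :=
  (∀ x y : Fin (n+1) → ℝ, lform n (g.mulVec x) (g.mulVec y) = lform n x y)
    ∧ g.det = 1 ∧ 0 < g 0 0

/-- The conformal action of `G` on the sphere: `g(x)ᵢ = (g x̃)ᵢ / (g x̃)₀`. -/
def sphAct (n : ℕ) (g : Matrix (Fin (n+1)) (Fin (n+1)) ℝ)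
    (x : EuclideanSpace ℝ (Fin n)) : EuclideanSpace ℝ (Fin n) :=
  WithLp.toLp 2 (fun i : Fin n => g.mulVec (tilde n x) i.succ / g.mulVec (tilde n x) 0)

/-- The conformal factor `κ(g,x) = (g x̃)₀⁻¹`. -/
def kappa (n : ℕ) (g : Matrix (Fin (n+1)) (Fin (n+1)) ℝ)
    (x : EuclideanSpace ℝ (Fin n)) : ℝ :=
  (g.mulVec (tilde n x) 0)⁻¹

end

/-!
For `g ∈ SO₀(1,n)` and `x` on the sphere, `x̃ = (1, x)` is a null vector and
`(g x)~ = κ(g,x) • g x̃`. As `|x - y|² = 2 [x̃, ỹ]` on the sphere and `g` preserves `[·,·]`, this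
gives the Möbius distortion rule `|g x - g y|² = κ(g,x) κ(g,y) |x - y|²`.
On the layer of the sphere where `t ^ k ≤ κ < t ^ (k+1)`, `g` is Lipschitz with constant
`t ^ (k+1)` and its inverse with constant `t ^ (-k)`, so `μH[n-1] (g '' A)` and
`∫_A κ^(n-1) dμH[n-1]` agree up to a factor `t ^ (n-1)`. Letting `t → 1`, the push-forward of `σ`
under `g⁻¹` has density `κ(g,·)^(n-1)`.
-/

open Set Metric Filter Topology Function
open scoped ENNReal

lemma le_of_forall_one_lt_le_ofReal_rpow_mul {a b : ℝ≥0∞} {d : ℝ}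
    (h : ∀ t : ℝ, 1 < t → a ≤ ENNReal.ofReal t ^ d * b) : a ≤ b := by
  have hlim : Tendsto (fun t : ℝ => ENNReal.ofReal t ^ d * b) (𝓝[>] 1) (𝓝 b) := by
    have h1 : Tendsto (fun t : ℝ => ENNReal.ofReal t ^ d) (𝓝[>] 1) (𝓝 1) := by
      simpa using
        ((ENNReal.continuous_ofReal.tendsto 1).mono_left nhdsWithin_le_nhds).ennrpow_const d
    simpa using ENNReal.Tendsto.mul_const h1 (Or.inl one_ne_zero)
  exact ge_of_tendsto hlim (eventually_nhdsWithin_of_forall h)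

section ScalesDist

variable {X Y : Type*} [MetricSpace X] [MetricSpace Y]

/-- The distance distortion rule of a Möbius transformation of the sphere. -/
def ScalesDistOn (f : X → Y) (ρ : X → ℝ) (s : Set X) : Prop :=
  ∀ x ∈ s, ∀ y ∈ s, dist (f x) (f y) ^ 2 = ρ x * ρ y * dist x y ^ 2

namespace ScalesDistOn

variable {f : X → Y} {ρ : X → ℝ} {s : Set X}

lemma mono (hf : ScalesDistOn f ρ s) {t : Set X} (hts : t ⊆ s) : ScalesDistOn f ρ t :=
  fun x hx y hy => hf x (hts hx) y (hts hy)

lemma injOn (hf : ScalesDistOn f ρ s) (hρ : ∀ x ∈ s, 0 < ρ x) : InjOn f s := fun x hx y hy hxy => by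
  have := hf x hx y hy
  rw [hxy, dist_self, zero_pow two_ne_zero, eq_comm, mul_eq_zero] at this
  simpa [(hρ x hx).ne', (hρ y hy).ne'] using this

lemma dist_le (hf : ScalesDistOn f ρ s) {b : ℝ} (hρ : ∀ x ∈ s, 0 ≤ ρ x ∧ ρ x ≤ b)
    {x y : X} (hx : x ∈ s) (hy : y ∈ s) : dist (f x) (f y) ≤ b * dist x y := by
  have hb : 0 ≤ b := (hρ x hx).1.trans (hρ x hx).2
  rw [← pow_le_pow_iff_left₀ dist_nonneg (by positivity) two_ne_zero, hf x hx y hy, mul_pow, sq b]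
  exact mul_le_mul_of_nonneg_right
    (mul_le_mul (hρ x hx).2 (hρ y hy).2 (hρ y hy).1 hb) (sq_nonneg _)

lemma le_dist (hf : ScalesDistOn f ρ s) {a : ℝ} (ha : 0 ≤ a) (hρ : ∀ x ∈ s, a ≤ ρ x)
    {x y : X} (hx : x ∈ s) (hy : y ∈ s) : a * dist x y ≤ dist (f x) (f y) := by
  rw [← pow_le_pow_iff_left₀ (by positivity) dist_nonneg two_ne_zero, hf x hx y hy, mul_pow, sq a]
  exact mul_le_mul_of_nonneg_right
    (mul_le_mul (hρ x hx) (hρ y hy) ha (ha.trans (hρ x hx))) (sq_nonneg _)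

end ScalesDistOn

end ScalesDist

section HausdorffMeasure

variable {X Y : Type*} [MetricSpace X] [MeasurableSpace X] [BorelSpace X]
  [MetricSpace Y] [MeasurableSpace Y] [BorelSpace Y]

lemma ofReal_rpow_mul_hausdorffMeasure_le_image {f : X → Y} {s : Set X} {a d : ℝ}
    (ha : 0 < a) (hd : 0 ≤ d) (h : ∀ x ∈ s, ∀ y ∈ s, a * dist x y ≤ dist (f x) (f y)) :
    ENNReal.ofReal a ^ d * μH[d] s ≤ μH[d] (f '' s) := by
  rcases s.eq_empty_or_nonempty with rfl | ⟨x₀, -⟩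
  · simp
  have : Nonempty X := ⟨x₀⟩
  have hinj : InjOn f s := fun x hx y hy hxy => by
    have := h x hx y hy
    rw [hxy, dist_self] at this
    exact dist_le_zero.1 (nonpos_of_mul_nonpos_right this ha)
  have hinv := hinj.leftInvOn_invFunOn
  have hlip : LipschitzOnWith (Real.toNNReal a⁻¹) (invFunOn f s) (f '' s) := by
    refine LipschitzOnWith.of_dist_le_mul ?_
    rintro _ ⟨x, hx, rfl⟩ _ ⟨y, hy, rfl⟩
    rw [hinv hx, hinv hy, Real.coe_toNNReal _ (inv_nonneg.2 ha.le), inv_mul_eq_div,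
      le_div_iff₀' ha]
    exact h x hx y hy
  have hle := hlip.hausdorffMeasure_image_le hd
  rw [hinv.image_image] at hle
  calc ENNReal.ofReal a ^ d * μH[d] s
      ≤ ENNReal.ofReal a ^ d * (ENNReal.ofReal a⁻¹ ^ d * μH[d] (f '' s)) := by gcongr; exact hle
    _ = μH[d] (f '' s) := by
      rw [← mul_assoc, ← ENNReal.mul_rpow_of_nonneg _ _ hd, ← ENNReal.ofReal_mul ha.le,
        mul_inv_cancel₀ ha.ne', ENNReal.ofReal_one, ENNReal.one_rpow, one_mul]

namespace ScalesDistOn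

variable {f : X → Y} {ρ : X → ℝ} {s : Set X}

lemma hausdorffMeasure_image_le_of_pinched (hf : ScalesDistOn f ρ s) {a t d : ℝ} (ha : 0 ≤ a)
    (ht : 0 ≤ t) (hd : 0 ≤ d) (hs : MeasurableSet s) (hρ : ∀ x ∈ s, a ≤ ρ x ∧ ρ x ≤ t * a) :
    μH[d] (f '' s) ≤ ENNReal.ofReal t ^ d * ∫⁻ x in s, ENNReal.ofReal (ρ x) ^ d ∂μH[d] := by
  have hlip : LipschitzOnWith (Real.toNNReal (t * a)) f s := by
    refine LipschitzOnWith.of_dist_le_mul fun x hx y hy => ?_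
    rw [Real.coe_toNNReal _ (by positivity)]
    exact hf.dist_le (fun z hz => ⟨ha.trans (hρ z hz).1, (hρ z hz).2⟩) hx hy
  calc μH[d] (f '' s) ≤ ENNReal.ofReal (t * a) ^ d * μH[d] s := hlip.hausdorffMeasure_image_le hd
    _ = ENNReal.ofReal t ^ d * ∫⁻ _ in s, ENNReal.ofReal a ^ d ∂μH[d] := by
      rw [setLIntegral_const, ENNReal.ofReal_mul ht, ENNReal.mul_rpow_of_nonneg _ _ hd, mul_assoc]
    _ ≤ ENNReal.ofReal t ^ d * ∫⁻ x in s, ENNReal.ofReal (ρ x) ^ d ∂μH[d] :=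
      mul_le_mul_right (setLIntegral_mono' hs fun x hx =>
        ENNReal.rpow_le_rpow (ENNReal.ofReal_le_ofReal (hρ x hx).1) hd) _

lemma lintegral_le_hausdorffMeasure_image_of_pinched (hf : ScalesDistOn f ρ s) {a t d : ℝ}
    (ha : 0 < a) (ht : 0 ≤ t) (hd : 0 ≤ d) (hρ : ∀ x ∈ s, a ≤ ρ x ∧ ρ x ≤ t * a) :
    ∫⁻ x in s, ENNReal.ofReal (ρ x) ^ d ∂μH[d] ≤ ENNReal.ofReal t ^ d * μH[d] (f '' s) := by
  calc ∫⁻ x in s, ENNReal.ofReal (ρ x) ^ d ∂μH[d]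
    _ ≤ ∫⁻ _ in s, ENNReal.ofReal (t * a) ^ d ∂μH[d] :=
      setLIntegral_mono measurable_const fun x hx =>
        ENNReal.rpow_le_rpow (ENNReal.ofReal_le_ofReal (hρ x hx).2) hd
    _ = ENNReal.ofReal t ^ d * (ENNReal.ofReal a ^ d * μH[d] s) := by
      rw [setLIntegral_const, ENNReal.ofReal_mul ht, ENNReal.mul_rpow_of_nonneg _ _ hd, mul_assoc]
    _ ≤ ENNReal.ofReal t ^ d * μH[d] (f '' s) :=
      mul_le_mul_right (ofReal_rpow_mul_hausdorffMeasure_le_image ha hd fun x hx y hy =>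
        hf.le_dist ha.le (fun z hz => (hρ z hz).1) hx hy) _

theorem hausdorffMeasure_image (hf : ScalesDistOn f ρ s) (hρ : Measurable ρ)
    (hρs : ∀ x ∈ s, 0 < ρ x) {d : ℝ} (hd : 0 ≤ d) (hs : MeasurableSet s)
    (himage : ∀ u ⊆ s, MeasurableSet u → MeasurableSet (f '' u)) :
    μH[d] (f '' s) = ∫⁻ x in s, ENNReal.ofReal (ρ x) ^ d ∂μH[d] := by
  apply le_antisymm <;> refine le_of_forall_one_lt_le_ofReal_rpow_mul (d := d) fun t ht => ?_
  all_goals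
    set L : ℤ → Set X := fun k => s ∩ ρ ⁻¹' Ico (t ^ k) (t ^ (k + 1))
    have hL : ∀ k, MeasurableSet (L k) := fun k => hs.inter (hρ measurableSet_Ico)
    have hLs : ∀ k, L k ⊆ s := fun k => inter_subset_left
    have hIco : Pairwise (Disjoint on fun k : ℤ => Ico (t ^ k) (t ^ (k + 1))) := by
      simpa only [Order.succ_eq_add_one] using
        (zpow_right_mono₀ ht.le).pairwise_disjoint_on_Ico_succ
    have hdisj : Pairwise (Disjoint on L) := fun k l hkl =>
      (Disjoint.preimage ρ (hIco hkl)).mono inter_subset_right inter_subset_right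
    have hcover : ⋃ k, L k = s := by
      refine Subset.antisymm (iUnion_subset hLs) fun x hx => ?_
      obtain ⟨k, hk⟩ := exists_mem_Ico_zpow (hρs x hx) ht
      exact mem_iUnion.2 ⟨k, hx, hk⟩
    have hpinch : ∀ k, ∀ x ∈ L k, t ^ k ≤ ρ x ∧ ρ x ≤ t * t ^ k := fun k x hx => by
      rw [mul_comm, ← zpow_add_one₀ (by positivity)]
      exact ⟨hx.2.1, hx.2.2.le⟩
  · calc μH[d] (f '' s) = μH[d] (⋃ k, f '' L k) := by rw [← image_iUnion, hcover]
      _ ≤ ∑' k, μH[d] (f '' L k) := measure_iUnion_le _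
      _ ≤ ∑' k, ENNReal.ofReal t ^ d * ∫⁻ x in L k, ENNReal.ofReal (ρ x) ^ d ∂μH[d] :=
        ENNReal.tsum_le_tsum fun k => (hf.mono (hLs k)).hausdorffMeasure_image_le_of_pinched
          (by positivity) (by positivity) hd (hL k) (hpinch k)
      _ = ENNReal.ofReal t ^ d * ∫⁻ x in s, ENNReal.ofReal (ρ x) ^ d ∂μH[d] := by
        rw [ENNReal.tsum_mul_left, ← lintegral_iUnion hL hdisj, hcover]
  · calc ∫⁻ x in s, ENNReal.ofReal (ρ x) ^ d ∂μH[d]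
      _ = ∑' k, ∫⁻ x in L k, ENNReal.ofReal (ρ x) ^ d ∂μH[d] := by
        rw [← lintegral_iUnion hL hdisj, hcover]
      _ ≤ ∑' k, ENNReal.ofReal t ^ d * μH[d] (f '' L k) :=
        ENNReal.tsum_le_tsum fun k =>
          (hf.mono (hLs k)).lintegral_le_hausdorffMeasure_image_of_pinched
            (by positivity) (by positivity) hd (hpinch k)
      _ = ENNReal.ofReal t ^ d * μH[d] (f '' s) := by
        rw [ENNReal.tsum_mul_left, ← measure_iUnion
          (fun k l hkl => (hdisj hkl).image (hf.injOn hρs) (hLs k) (hLs l))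
          (fun k => himage _ (hLs k) (hL k)), ← image_iUnion, hcover]

theorem map_restrict_eq_withDensity (hf : ScalesDistOn f ρ s) (hρ : Measurable ρ)
    (hρs : ∀ x ∈ s, 0 < ρ x) {d : ℝ} (hd : 0 ≤ d) (hs : MeasurableSet s) {ψ : Y → X}
    {t : Set Y} (ht : MeasurableSet t) (hψ : Measurable ψ) (hinv : InvOn ψ f s t)
    (hf_maps : MapsTo f s t) (hψ_maps : MapsTo ψ t s) :
    (μH[d].restrict t).map ψ =
      (μH[d].restrict s).withDensity fun x => ENNReal.ofReal (ρ x) ^ d := by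
  have himage : ∀ u, f '' (u ∩ s) = ψ ⁻¹' u ∩ t := fun u => by
    rw [hinv.1.image_inter', (hinv.bijOn hf_maps hψ_maps).image_eq]
  ext A hA
  rw [Measure.map_apply hψ hA, Measure.restrict_apply (hψ hA), withDensity_apply _ hA,
    Measure.restrict_restrict hA, ← himage]
  refine (hf.mono inter_subset_right).hausdorffMeasure_image hρ (fun x hx => hρs x hx.2) hd
    (hA.inter hs) fun u hu hu_meas => ?_
  rw [← inter_eq_left.2 (hu.trans inter_subset_right), himage]
  exact (hψ hu_meas).inter ht

end ScalesDistOn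

end HausdorffMeasure

section Lorentz

variable {n : ℕ}

lemma lform_smul_smul (a b : ℝ) (v w : Fin (n+1) → ℝ) :
    lform n (a • v) (b • w) = a * b * lform n v w := by
  simp only [lform, Pi.smul_apply, smul_eq_mul, mul_sub, Finset.mul_sum]
  congr 1 <;> [ring; exact Finset.sum_congr rfl fun i _ => by ring]

lemma lform_single_zero_left (v : Fin (n+1) → ℝ) : lform n (Pi.single 0 1) v = v 0 := by
  simp [lform, Fin.succ_ne_zero]

lemma lform_single_zero_right (v : Fin (n+1) → ℝ) : lform n v (Pi.single 0 1) = v 0 := by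
  simp [lform, Fin.succ_ne_zero]

lemma apply_zero_pos_of_lform_pos {u v : Fin (n+1) → ℝ} (hv : 0 ≤ lform n v v)
    (hu : 0 < lform n u u) (hu0 : 0 < u 0) (hvu : 0 < lform n v u) : 0 < v 0 := by
  simp only [lform] at hv hu hvu
  by_contra! hv0
  have hcs :=
    Finset.sum_mul_sq_le_sq_mul_sq Finset.univ (fun i : Fin n => v i.succ) (fun i => u i.succ)
  simp only [sq] at hcs
  have hA : 0 ≤ ∑ i : Fin n, v i.succ * v i.succ := Finset.sum_nonneg fun i _ => mul_self_nonneg _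
  have hB : 0 ≤ ∑ i : Fin n, u i.succ * u i.succ := Finset.sum_nonneg fun i _ => mul_self_nonneg _
  nlinarith [mul_nonpos_of_nonpos_of_nonneg hv0 hu0.le]

lemma lform_tilde_tilde (x y : EuclideanSpace ℝ (Fin n)) :
    lform n (tilde n x) (tilde n y) = 1 - inner ℝ x y := by
  simp [lform, tilde, PiLp.inner_apply, mul_comm]

lemma mem_sphere_iff_lform_tilde {x : EuclideanSpace ℝ (Fin n)} :
    x ∈ sphere 0 1 ↔ lform n (tilde n x) (tilde n x) = 0 := by
  rw [lform_tilde_tilde, real_inner_self_eq_norm_sq, mem_sphere_zero_iff_norm, sub_eq_zero,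
    eq_comm (a := (1 : ℝ)), pow_eq_one_iff_of_nonneg (norm_nonneg x) two_ne_zero]

lemma dist_sq_eq_two_mul_lform_tilde {x y : EuclideanSpace ℝ (Fin n)} (hx : x ∈ sphere 0 1)
    (hy : y ∈ sphere 0 1) : dist x y ^ 2 = 2 * lform n (tilde n x) (tilde n y) := by
  rw [lform_tilde_tilde, dist_eq_norm, norm_sub_sq_real, mem_sphere_zero_iff_norm.1 hx,
    mem_sphere_zero_iff_norm.1 hy]
  ring

lemma tilde_sphAct {g : Matrix (Fin (n+1)) (Fin (n+1)) ℝ} {x : EuclideanSpace ℝ (Fin n)}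
    (h : (g *ᵥ tilde n x) 0 ≠ 0) : tilde n (sphAct n g x) = kappa n g x • g *ᵥ tilde n x := by
  funext i
  refine Fin.cases ?_ (fun j => ?_) i
  · change (1 : ℝ) = kappa n g x * (g *ᵥ tilde n x) 0
    rw [kappa, inv_mul_cancel₀ h]
  · change (g *ᵥ tilde n x) j.succ / (g *ᵥ tilde n x) 0 = kappa n g x * (g *ᵥ tilde n x) j.succ
    rw [kappa, div_eq_inv_mul]

lemma sphAct_eq_of_mulVec_tilde_eq_smul {g : Matrix (Fin (n+1)) (Fin (n+1)) ℝ}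
    {x y : EuclideanSpace ℝ (Fin n)} {c : ℝ} (hc : c ≠ 0) (h : g *ᵥ tilde n x = c • tilde n y) :
    sphAct n g x = y := by
  ext i
  change (g *ᵥ tilde n x) i.succ / (g *ᵥ tilde n x) 0 = y i
  rw [h]
  simp [tilde, hc]

lemma measurable_sphAct (g : Matrix (Fin (n+1)) (Fin (n+1)) ℝ) : Measurable (sphAct n g) := by
  unfold sphAct tilde
  fun_prop

lemma measurable_kappa (g : Matrix (Fin (n+1)) (Fin (n+1)) ℝ) : Measurable (kappa n g) := by
  unfold kappa tilde
  fun_prop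

namespace IsLorentz

variable {g : Matrix (Fin (n+1)) (Fin (n+1)) ℝ}

lemma isUnit_det (hg : IsLorentz n g) : IsUnit g.det := by
  rw [hg.2.1]
  exact isUnit_one

lemma inv (hg : IsLorentz n g) : IsLorentz n g⁻¹ := by
  have hform : ∀ x y, lform n (g⁻¹ *ᵥ x) (g⁻¹ *ᵥ y) = lform n x y := fun x y => by
    rw [← hg.1 (g⁻¹ *ᵥ x)]
    simp only [mulVec_mulVec, mul_nonsing_inv _ hg.isUnit_det, one_mulVec]
  refine ⟨hform, by rw [det_nonsing_inv, hg.2.1, Ring.inverse_one], ?_⟩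
  -- `(g⁻¹)₀₀ = [g⁻¹ e₀, e₀] = [e₀, g e₀] = g₀₀`
  have h := hform (Pi.single 0 1) (g *ᵥ Pi.single 0 1)
  rw [mulVec_mulVec, nonsing_inv_mul _ hg.isUnit_det, one_mulVec, lform_single_zero_right,
    lform_single_zero_left, mulVec_single_one, mulVec_single_one, col_apply, col_apply] at h
  exact h ▸ hg.2.2

lemma mulVec_tilde_zero_pos (hg : IsLorentz n g) {x : EuclideanSpace ℝ (Fin n)}
    (hx : x ∈ sphere 0 1) : 0 < (g *ᵥ tilde n x) 0 := by
  -- `g x̃` is null and pairs positively with the future timelike vector `g e₀`.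
  have he : lform n (Pi.single 0 1) (Pi.single 0 1) = 1 := by
    rw [lform_single_zero_left, Pi.single_eq_same]
  refine apply_zero_pos_of_lform_pos (u := g *ᵥ Pi.single 0 1) ?_ ?_ ?_ ?_
  · rw [hg.1, mem_sphere_iff_lform_tilde.1 hx]
  · rw [hg.1, he]
    exact one_pos
  · simpa only [mulVec_single_one, col_apply] using hg.2.2
  · rw [hg.1, lform_single_zero_right]
    simp [tilde]

lemma kappa_pos (hg : IsLorentz n g) {x : EuclideanSpace ℝ (Fin n)} (hx : x ∈ sphere 0 1) :
    0 < kappa n g x :=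
  inv_pos.2 (hg.mulVec_tilde_zero_pos hx)

lemma tilde_sphAct (hg : IsLorentz n g) {x : EuclideanSpace ℝ (Fin n)} (hx : x ∈ sphere 0 1) :
    tilde n (sphAct n g x) = kappa n g x • g *ᵥ tilde n x :=
  _root_.tilde_sphAct (hg.mulVec_tilde_zero_pos hx).ne'

lemma mapsTo_sphAct (hg : IsLorentz n g) :
    MapsTo (sphAct n g) (sphere 0 1) (sphere 0 1) := fun x hx => by
  rw [mem_sphere_iff_lform_tilde, hg.tilde_sphAct hx, lform_smul_smul, hg.1,
    mem_sphere_iff_lform_tilde.1 hx, mul_zero]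

lemma sphAct_inv_sphAct (hg : IsLorentz n g) {x : EuclideanSpace ℝ (Fin n)}
    (hx : x ∈ sphere 0 1) : sphAct n g⁻¹ (sphAct n g x) = x := by
  refine sphAct_eq_of_mulVec_tilde_eq_smul (hg.kappa_pos hx).ne' ?_
  rw [hg.tilde_sphAct hx, mulVec_smul, mulVec_mulVec, nonsing_inv_mul _ hg.isUnit_det,
    one_mulVec]

lemma invOn_sphAct (hg : IsLorentz n g) :
    InvOn (sphAct n g⁻¹) (sphAct n g) (sphere 0 1) (sphere 0 1) := by
  refine ⟨fun x hx => hg.sphAct_inv_sphAct hx, fun x hx => ?_⟩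
  simpa [nonsing_inv_nonsing_inv _ hg.isUnit_det] using hg.inv.sphAct_inv_sphAct hx

lemma scalesDistOn_sphAct (hg : IsLorentz n g) :
    ScalesDistOn (sphAct n g) (kappa n g) (sphere 0 1) := fun x hx y hy => by
  rw [dist_sq_eq_two_mul_lform_tilde (hg.mapsTo_sphAct hx) (hg.mapsTo_sphAct hy),
    dist_sq_eq_two_mul_lform_tilde hx hy, hg.tilde_sphAct hx, hg.tilde_sphAct hy,
    lform_smul_smul, hg.1]
  ring

end IsLorentz

end Lorentz

/-- ∫_S f(g⁻¹(x)) dσ(x) = ∫_S f(y) κ(g,y)^{n-1} dσ(y), where σ is the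
(n−1)-dimensional Hausdorff measure on the unit sphere. -/
theorem statement6 (n : ℕ) (hn : 2 ≤ n)
    (g : Matrix (Fin (n+1)) (Fin (n+1)) ℝ) (hg : IsLorentz n g)
    (f : EuclideanSpace ℝ (Fin n) → ℂ)
    (hf : IntegrableOn f (Metric.sphere (0 : EuclideanSpace ℝ (Fin n)) 1) μH[(n : ℝ) - 1]) :
    ∫ x in Metric.sphere (0 : EuclideanSpace ℝ (Fin n)) 1,
        f (sphAct n g⁻¹ x) ∂μH[(n : ℝ) - 1]
      = ∫ y in Metric.sphere (0 : EuclideanSpace ℝ (Fin n)) 1,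
          (kappa n g y ^ (n - 1)) • f y ∂μH[(n : ℝ) - 1] := by
  have hd : ((n - 1 : ℕ) : ℝ) = (n : ℝ) - 1 := Nat.cast_pred (by omega)
  have hS : MeasurableSet (sphere (0 : EuclideanSpace ℝ (Fin n)) 1) := isClosed_sphere.measurableSet
  have hmap := hg.scalesDistOn_sphAct.map_restrict_eq_withDensity (measurable_kappa g)
    (fun x hx => hg.kappa_pos hx) (hd ▸ Nat.cast_nonneg _) hS hS (measurable_sphAct g⁻¹)
    hg.invOn_sphAct hg.mapsTo_sphAct hg.inv.mapsTo_sphAct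
  rw [← integral_map (measurable_sphAct g⁻¹).aemeasurable
      (hmap ▸ hf.1.mono_ac (withDensity_absolutelyContinuous _ _)), hmap,
    integral_withDensity_eq_integral_toReal_smul
      ((measurable_kappa g).ennreal_ofReal.pow_const _)
      (ae_of_all _ fun x => ENNReal.rpow_lt_top_of_nonneg (hd ▸ Nat.cast_nonneg _)
        ENNReal.ofReal_ne_top)]
  refine setIntegral_congr_fun hS fun y hy => ?_
  rw [← ENNReal.toReal_rpow, ENNReal.toReal_ofReal (hg.kappa_pos hy).le, ← hd, Real.rpow_natCast]
end

section
/- (i) For any s, t ∈ S with s ≠ t, the subspace Π(s,t) = span{s̃, t̃} of ℝ^{n+1} is 2-dimensional, and the restriction of the quadratic form q to Π(s,t) is nondegenerate of signature (1,1). (ii) Conversely, if Π is a 2-dimensional subspace of ℝ^{n+1} on which q restricts to a nondegenerate form of signature (1,1), then there exist s, t ∈ S with s ≠ t and Π = span{s̃, t̃}. -/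
open scoped RealInnerProductSpace
open MeasureTheory Matrix

noncomputable section

/-!
The isotropic lines of `q` are exactly the lines `ℝ s̃` with `s ∈ S`, and for `s, t ∈ S` one has
`[s̃, t̃] = ‖s - t‖² / 2`. If `x, y` are isotropic with `[x, y] = c > 0`, then
`q(p x + r y) = 2 p r c`, so `e, f = (x ± y) / √(2c)` turn `q` into `u² - v²`. Conversely, if
`q = u² - v²` in a basis `e, f`, then `e ± f` are isotropic with `[e + f, e - f] = 2 ≠ 0`, so they
span two distinct isotropic lines `ℝ s̃`, `ℝ t̃`.
-/

namespace Submodule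

variable {K M : Type*} [Field K] [AddCommGroup M] [Module K M]

theorem span_pair_smul_smul {c d : K} (hc : c ≠ 0) (hd : d ≠ 0) (x y : M) :
    span K {c • x, d • y} = span K {x, y} := by
  rw [span_insert, span_insert, span_singleton_smul_eq hc.isUnit,
    span_singleton_smul_eq hd.isUnit]

theorem span_pair_add_sub [CharZero K] (x y : M) :
    span K {x + y, x - y} = span K {x, y} := by
  apply le_antisymm <;> rw [span_le, Set.insert_subset_iff, Set.singleton_subset_iff] <;>
    simp only [SetLike.mem_coe, mem_span_pair]
  · exact ⟨⟨1, 1, by module⟩, ⟨1, -1, by module⟩⟩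
  · exact ⟨⟨2⁻¹, 2⁻¹, by module⟩, ⟨2⁻¹, -2⁻¹, by module⟩⟩

end Submodule

namespace LinearMap.BilinForm

section Field

variable {K M : Type*} [Field K] [AddCommGroup M] [Module K M] {β : LinearMap.BilinForm K M}
  {x y : M}

theorem apply_smul_add_smul_self_of_isotropic (hβ : β.IsSymm) (hx : β x x = 0) (hy : β y y = 0)
    (p r : K) : β (p • x + r • y) (p • x + r • y) = 2 * p * r * β x y := by
  simp only [map_add, map_smul, LinearMap.add_apply, LinearMap.smul_apply, smul_eq_mul, hx, hy,
    hβ.eq y x]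
  ring

theorem linearIndependent_pair_of_isotropic (hβ : β.IsSymm) (hx : β x x = 0) (hy : β y y = 0)
    (hxy : β x y ≠ 0) : LinearIndependent K ![x, y] := by
  rw [LinearIndependent.pair_iff]
  intro p r h
  have hpx : β x (p • x + r • y) = r * β x y := by simp [hx]
  have hpy : β y (p • x + r • y) = p * β x y := by simp [hy, hβ.eq y x]
  rw [h, map_zero] at hpx hpy
  exact ⟨(mul_eq_zero.1 hpy.symm).resolve_right hxy, (mul_eq_zero.1 hpx.symm).resolve_right hxy⟩

theorem isotropic_add_sub_of_forall_apply_eq_sq_sub_sq (hβ : β.IsSymm) {e f : M}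
    (hq : ∀ a b : K, β (a • e + b • f) (a • e + b • f) = a ^ 2 - b ^ 2) :
    β (e + f) (e + f) = 0 ∧ β (e - f) (e - f) = 0 ∧ β (e + f) (e - f) = 2 := by
  have hee : β e e = 1 := by simpa using hq 1 0
  have hff : β f f = -1 := by simpa using hq 0 1
  refine ⟨by simpa using hq 1 1, by simpa [sub_eq_add_neg] using hq 1 (-1), ?_⟩
  simp only [map_add, map_sub, LinearMap.add_apply, hee, hff, hβ.eq f e]
  ring

end Field

theorem exists_forall_apply_eq_sq_sub_sq_of_isotropic {M : Type*} [AddCommGroup M]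
    [Module ℝ M] {β : LinearMap.BilinForm ℝ M} (hβ : β.IsSymm) {x y : M} (hx : β x x = 0)
    (hy : β y y = 0) (hxy : 0 < β x y) :
    ∃ e f : M, Submodule.span ℝ {e, f} = Submodule.span ℝ {x, y} ∧
      ∀ a b : ℝ, β (a • e + b • f) (a • e + b • f) = a ^ 2 - b ^ 2 := by
  set r := √(2 * β x y)
  have hr : r ^ 2 = 2 * β x y := Real.sq_sqrt (by linarith)
  have hr0 : r ≠ 0 := (Real.sqrt_pos.2 (by linarith)).ne'
  refine ⟨r⁻¹ • (x + y), r⁻¹ • (x - y), ?_, fun a b => ?_⟩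
  · rw [Submodule.span_pair_smul_smul (inv_ne_zero hr0) (inv_ne_zero hr0),
      Submodule.span_pair_add_sub]
  · have hab : a • r⁻¹ • (x + y) + b • r⁻¹ • (x - y) =
        (r⁻¹ * (a + b)) • x + (r⁻¹ * (a - b)) • y := by module
    rw [hab, apply_smul_add_smul_self_of_isotropic hβ hx hy]
    field_simp
    rw [hr]
    ring

end LinearMap.BilinForm

def lorentz (n : ℕ) : LinearMap.BilinForm ℝ (Fin (n+1) → ℝ) :=
  LinearMap.mk₂ ℝ (lform n)
    (fun x y z => by simp only [lform, Pi.add_apply, add_mul, Finset.sum_add_distrib]; ring)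
    (fun c x y => by
      simp only [lform, Pi.smul_apply, smul_eq_mul, mul_assoc, ← Finset.mul_sum]; ring)
    (fun x y z => by simp only [lform, Pi.add_apply, mul_add, Finset.sum_add_distrib]; ring)
    (fun c x y => by
      simp only [lform, Pi.smul_apply, smul_eq_mul, mul_left_comm _ c, ← Finset.mul_sum]; ring)

@[simp]
theorem lorentz_apply (n : ℕ) (x y : Fin (n+1) → ℝ) : lorentz n x y = lform n x y := rfl

theorem lorentz_isSymm (n : ℕ) : (lorentz n).IsSymm :=
  ⟨fun x y => by simp only [lorentz_apply, lform, mul_comm]⟩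

theorem lform_tilde_tilde_s14 (n : ℕ) {s t : EuclideanSpace ℝ (Fin n)} (hs : ‖s‖ = 1)
    (ht : ‖t‖ = 1) : lform n (tilde n s) (tilde n t) = ‖s - t‖ ^ 2 / 2 := by
  have hst : ⟪s, t⟫ = ∑ i, s i * t i := by simp [PiLp.inner_apply, mul_comm]
  rw [norm_sub_sq_real, hs, ht, hst]
  simp only [lform, tilde, Fin.cons_zero, Fin.cons_succ]
  ring

theorem exists_eq_smul_tilde_of_isotropic (n : ℕ) {u : Fin (n+1) → ℝ} (hu : u ≠ 0)
    (hq : lform n u u = 0) :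
    ∃ c : ℝ, c ≠ 0 ∧ ∃ s : EuclideanSpace ℝ (Fin n), ‖s‖ = 1 ∧ u = c • tilde n s := by
  have hsum : ∑ i : Fin n, u i.succ ^ 2 = u 0 ^ 2 := by
    simp only [lform, ← sq] at hq; linarith
  have hu0 : u 0 ≠ 0 := by
    intro h0
    rw [h0, zero_pow two_ne_zero, Finset.sum_eq_zero_iff_of_nonneg fun i _ => sq_nonneg _] at hsum
    exact hu <| funext fun j =>
      Fin.cases h0 (fun i => pow_eq_zero_iff two_ne_zero |>.1 (hsum i (Finset.mem_univ i))) j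
  refine ⟨u 0, hu0, WithLp.toLp 2 fun i => u i.succ / u 0, ?_, ?_⟩
  · rw [← pow_eq_one_iff_of_nonneg (norm_nonneg _) two_ne_zero, EuclideanSpace.real_norm_sq_eq]
    simp only [div_pow, ← Finset.sum_div, hsum]
    exact div_self (pow_ne_zero 2 hu0)
  · funext j
    refine Fin.cases ?_ (fun i => ?_) j <;> simp [tilde, mul_div_cancel₀ _ hu0]

theorem statement14_general (n : ℕ) :
    (∀ s t : EuclideanSpace ℝ (Fin n), ‖s‖ = 1 → ‖t‖ = 1 → s ≠ t →
      Module.finrank ℝ (Submodule.span ℝ {tilde n s, tilde n t}) = 2 ∧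
      ∃ e f : Fin (n+1) → ℝ,
        e ∈ Submodule.span ℝ {tilde n s, tilde n t} ∧
        f ∈ Submodule.span ℝ {tilde n s, tilde n t} ∧
        Submodule.span ℝ {e, f} = Submodule.span ℝ {tilde n s, tilde n t} ∧
        ∀ a b : ℝ, lform n (a • e + b • f) (a • e + b • f) = a ^ 2 - b ^ 2) ∧
    (∀ W : Submodule ℝ (Fin (n+1) → ℝ), Module.finrank ℝ W = 2 →
      (∃ e f : Fin (n+1) → ℝ, e ∈ W ∧ f ∈ W ∧ Submodule.span ℝ {e, f} = W ∧
        ∀ a b : ℝ, lform n (a • e + b • f) (a • e + b • f) = a ^ 2 - b ^ 2) →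
      ∃ s t : EuclideanSpace ℝ (Fin n), ‖s‖ = 1 ∧ ‖t‖ = 1 ∧ s ≠ t ∧
        W = Submodule.span ℝ {tilde n s, tilde n t}) := by
  have hsymm := lorentz_isSymm n
  have isotropic {s} (hs : ‖s‖ = 1) : lorentz n (tilde n s) (tilde n s) = 0 := by
    simp [lform_tilde_tilde_s14 n hs hs]
  constructor
  · intro s t hs ht hst
    have hpos : 0 < lorentz n (tilde n s) (tilde n t) := by
      rw [lorentz_apply, lform_tilde_tilde_s14 n hs ht]
      have : s - t ≠ 0 := sub_ne_zero.2 hst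
      positivity
    obtain ⟨e, f, hspan, hq⟩ := (lorentz n).exists_forall_apply_eq_sq_sub_sq_of_isotropic hsymm
      (isotropic hs) (isotropic ht) hpos
    have hrank := finrank_span_eq_card <| (lorentz n).linearIndependent_pair_of_isotropic hsymm
      (isotropic hs) (isotropic ht) hpos.ne'
    rw [Matrix.range_cons_cons_empty, Fintype.card_fin] at hrank
    refine ⟨hrank, e, f, hspan ▸ Submodule.subset_span (by simp),
      hspan ▸ Submodule.subset_span (by simp), hspan, hq⟩
  · rintro W - ⟨e, f, -, -, rfl, hq⟩
    obtain ⟨hu, hv, huv⟩ := (lorentz n).isotropic_add_sub_of_forall_apply_eq_sq_sub_sq hsymm hq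
    have hu0 : e + f ≠ 0 := by rintro h; simp [h, -lorentz_apply] at huv
    have hv0 : e - f ≠ 0 := by rintro h; simp [h, -lorentz_apply] at huv
    obtain ⟨c, hc, s, hs, hus⟩ := exists_eq_smul_tilde_of_isotropic n hu0 hu
    obtain ⟨d, hd, t, ht, hvt⟩ := exists_eq_smul_tilde_of_isotropic n hv0 hv
    refine ⟨s, t, hs, ht, ?_, ?_⟩
    · rintro rfl
      rw [hus, hvt] at huv
      simp [isotropic hs] at huv
    · rw [← Submodule.span_pair_add_sub, hus, hvt, Submodule.span_pair_smul_smul hc hd]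

/-- (i) for distinct s,t ∈ S, Π(s,t) = span{s̃,t̃} is 2-dimensional and q
restricts on it to a nondegenerate form of signature (1,1) (i.e. equals u²−v² in some
basis); (ii) conversely every 2-dimensional subspace on which q has signature (1,1) is of
the form span{s̃,t̃} for distinct s,t ∈ S. -/
theorem statement14 (n : ℕ) (hn : 2 ≤ n) :
    (∀ s t : EuclideanSpace ℝ (Fin n), ‖s‖ = 1 → ‖t‖ = 1 → s ≠ t →
      Module.finrank ℝ (Submodule.span ℝ {tilde n s, tilde n t}) = 2 ∧
      ∃ e f : Fin (n+1) → ℝ,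
        e ∈ Submodule.span ℝ {tilde n s, tilde n t} ∧
        f ∈ Submodule.span ℝ {tilde n s, tilde n t} ∧
        Submodule.span ℝ {e, f} = Submodule.span ℝ {tilde n s, tilde n t} ∧
        ∀ a b : ℝ, lform n (a • e + b • f) (a • e + b • f) = a ^ 2 - b ^ 2) ∧
    (∀ W : Submodule ℝ (Fin (n+1) → ℝ), Module.finrank ℝ W = 2 →
      (∃ e f : Fin (n+1) → ℝ, e ∈ W ∧ f ∈ W ∧ Submodule.span ℝ {e, f} = W ∧
        ∀ a b : ℝ, lform n (a • e + b • f) (a • e + b • f) = a ^ 2 - b ^ 2) →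
      ∃ s t : EuclideanSpace ℝ (Fin n), ‖s‖ = 1 ∧ ‖t‖ = 1 ∧ s ≠ t ∧
        W = Submodule.span ℝ {tilde n s, tilde n t}) :=
  statement14_general n
end
end

section
/- Let s₁, s₂, s₃ ∈ S with s₁ ≠ s₂. Set α₁ = |s₂−s₃|²/|s₁−s₂|², α₂ = |s₁−s₃|²/|s₁−s₂|², and σ₃ = s̃₃ − α₁ s̃₁ − α₂ s̃₂ ∈ ℝ^{n+1}. Then [σ₃, s̃₁] = 0 and [σ₃, s̃₂] = 0 (so σ₃ is the component of s̃₃ orthogonal, with respect to [·,·], to span{s̃₁, s̃₂}), and −q(σ₃) = (|s₁−s₃| · |s₂−s₃| / |s₁−s₂|)². -/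
/-!
For unit vectors the lifts `s̃ᵢ` are null vectors of `[·,·]` with `[s̃ᵢ, s̃ⱼ] = |sᵢ − sⱼ|² / 2`,
since `|sᵢ − sⱼ|² = 2 − 2 ⟪sᵢ, sⱼ⟫`. Expanding `σ₃` bilinearly, everything reduces to the Gram
matrix of three null vectors with off-diagonal entries `a/2, b/2, c/2`, for which the
coefficients `c/a`, `b/a` kill the pairings with the first two and leave `−q(σ₃) = bc/a`.
-/

open MeasureTheory Matrix

noncomputable section

section LorentzForm

variable {n : ℕ}

lemma lform_comm (x y : Fin (n+1) → ℝ) : lform n x y = lform n y x := by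
  simp only [lform, mul_comm]

lemma lform_sub_left (x y z : Fin (n+1) → ℝ) :
    lform n (x - y) z = lform n x z - lform n y z := by
  simp only [lform, Pi.sub_apply, sub_mul, Finset.sum_sub_distrib]
  ring

lemma lform_smul_left (a : ℝ) (x y : Fin (n+1) → ℝ) :
    lform n (a • x) y = a * lform n x y := by
  simp only [lform, Pi.smul_apply, smul_eq_mul, mul_sub, Finset.mul_sum, mul_assoc]

lemma lform_sub_right (x y z : Fin (n+1) → ℝ) :
    lform n z (x - y) = lform n z x - lform n z y := by
  rw [lform_comm, lform_sub_left, lform_comm x, lform_comm y]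

lemma lform_smul_right (a : ℝ) (x y : Fin (n+1) → ℝ) :
    lform n y (a • x) = a * lform n y x := by
  rw [lform_comm, lform_smul_left, lform_comm]

lemma lform_sub_smul_sub_smul_of_isotropic {u v w : Fin (n+1) → ℝ} {a b c : ℝ} (ha : a ≠ 0)
    (hu : lform n u u = 0) (hv : lform n v v = 0) (hw : lform n w w = 0)
    (huv : lform n u v = a / 2) (huw : lform n u w = b / 2) (hvw : lform n v w = c / 2) :
    lform n (w - (c / a) • u - (b / a) • v) u = 0 ∧
      lform n (w - (c / a) • u - (b / a) • v) v = 0 ∧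
      -lform n (w - (c / a) • u - (b / a) • v) (w - (c / a) • u - (b / a) • v) = b * c / a := by
  have hvu : lform n v u = a / 2 := lform_comm u v ▸ huv
  have hwu : lform n w u = b / 2 := lform_comm u w ▸ huw
  have hwv : lform n w v = c / 2 := lform_comm v w ▸ hvw
  simp only [lform_sub_left, lform_smul_left, lform_sub_right, lform_smul_right,
    hu, hv, hw, huv, huw, hvw, hvu, hwu, hwv]
  refine ⟨?_, ?_, ?_⟩ <;> field_simp <;> ring

end LorentzForm

lemma lform_tilde {n : ℕ} {x y : EuclideanSpace ℝ (Fin n)} (hx : ‖x‖ = 1) (hy : ‖y‖ = 1) :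
    lform n (tilde n x) (tilde n y) = ‖x - y‖ ^ 2 / 2 := by
  have hinner : inner ℝ x y = ∑ i : Fin n, x i * y i := by
    simp [PiLp.inner_apply, RCLike.inner_apply, mul_comm]
  have hdist : ‖x - y‖ ^ 2 = 2 - 2 * inner ℝ x y := by
    rw [norm_sub_sq_real, hx, hy]
    ring
  simp only [lform, tilde, Fin.cons_zero, Fin.cons_succ]
  rw [← hinner, hdist]
  ring

lemma lform_tilde_self {n : ℕ} {x : EuclideanSpace ℝ (Fin n)} (hx : ‖x‖ = 1) :
    lform n (tilde n x) (tilde n x) = 0 := by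
  simp [lform_tilde hx hx]

theorem statement15_general (n : ℕ)
    (s₁ s₂ s₃ : EuclideanSpace ℝ (Fin n))
    (h₁ : ‖s₁‖ = 1) (h₂ : ‖s₂‖ = 1) (h₃ : ‖s₃‖ = 1) (h12 : s₁ ≠ s₂) :
    ∀ σ₃ : Fin (n+1) → ℝ,
      σ₃ = tilde n s₃ - (‖s₂ - s₃‖ ^ 2 / ‖s₁ - s₂‖ ^ 2) • tilde n s₁
            - (‖s₁ - s₃‖ ^ 2 / ‖s₁ - s₂‖ ^ 2) • tilde n s₂ →
      lform n σ₃ (tilde n s₁) = 0 ∧ lform n σ₃ (tilde n s₂) = 0 ∧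
      -lform n σ₃ σ₃ = (‖s₁ - s₃‖ * ‖s₂ - s₃‖ / ‖s₁ - s₂‖) ^ 2 := by
  rintro σ₃ rfl
  have h12' : ‖s₁ - s₂‖ ^ 2 ≠ 0 := by simpa [sub_eq_zero] using h12
  obtain ⟨h₁₃, h₂₃, hnorm⟩ := lform_sub_smul_sub_smul_of_isotropic h12'
    (lform_tilde_self h₁) (lform_tilde_self h₂) (lform_tilde_self h₃)
    (lform_tilde h₁ h₂) (lform_tilde h₁ h₃) (lform_tilde h₂ h₃)
  refine ⟨h₁₃, h₂₃, ?_⟩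
  rw [hnorm, div_pow, mul_pow]

/-- with α₁ = |s₂−s₃|²/|s₁−s₂|², α₂ = |s₁−s₃|²/|s₁−s₂|² and
σ₃ = s̃₃ − α₁ s̃₁ − α₂ s̃₂, one has [σ₃, s̃₁] = [σ₃, s̃₂] = 0 and
−q(σ₃) = (|s₁−s₃||s₂−s₃|/|s₁−s₂|)². -/
theorem statement15 (n : ℕ) (hn : 2 ≤ n)
    (s₁ s₂ s₃ : EuclideanSpace ℝ (Fin n))
    (h₁ : ‖s₁‖ = 1) (h₂ : ‖s₂‖ = 1) (h₃ : ‖s₃‖ = 1) (h12 : s₁ ≠ s₂) :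
    ∀ σ₃ : Fin (n+1) → ℝ,
      σ₃ = tilde n s₃ - (‖s₂ - s₃‖ ^ 2 / ‖s₁ - s₂‖ ^ 2) • tilde n s₁
            - (‖s₁ - s₃‖ ^ 2 / ‖s₁ - s₂‖ ^ 2) • tilde n s₂ →
      lform n σ₃ (tilde n s₁) = 0 ∧ lform n σ₃ (tilde n s₂) = 0 ∧
      -lform n σ₃ σ₃ = (‖s₁ - s₃‖ * ‖s₂ - s₃‖ / ‖s₁ - s₂‖) ^ 2 :=
  statement15_general n s₁ s₂ s₃ h₁ h₂ h₃ h12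
end
end
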